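/- Let Z*, Δ ∈ ℝ^{n×N}, and suppose that for every k = 1, …, n the support of the k-th row of Δ is contained in the support of the k-th row of Z*. Then (1/2) ‖Δ Z*ᵀ − Z* Δᵀ‖_F ≤ sqrt( Σ_{k=1}^n ‖D_k Z* D̃_k Δ_{(k,·)}ᵀ‖₂² ) ≤ ( max_{1≤k≤n} ‖D_k Z* D̃_k‖₂ ) · ‖Δ‖_F, where D_k is the n×n diagonal matrix with ones on the diagonal except a zero at entry (k,k), and D̃_k is the N×N diagonal matrix with ones at entries (i,i) for i in the support of the k-th row of Z* and zeros elsewhere. -/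

import Mathlib

open scoped BigOperators
open Matrix

/-- Frobenius norm of a real matrix. -/
noncomputable def frobNorm {m n : ℕ} (A : Matrix (Fin m) (Fin n) ℝ) : ℝ :=
  Real.sqrt (∑ i, ∑ j, (A i j) ^ 2)

/-- Spectral (largest singular value / ℓ2-operator) norm of a real matrix. -/
noncomputable def specNorm {m n : ℕ} (A : Matrix (Fin m) (Fin n) ℝ) : ℝ :=
  ‖LinearMap.toContinuousLinearMap (Matrix.toEuclideanLin A)‖

/-- Euclidean (ℓ2) norm of a vector. -/
noncomputable def vecNorm {n : ℕ} (v : Fin n → ℝ) : ℝ :=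
  Real.sqrt (∑ i, v i ^ 2)

/-- β(z): the smallest nonzero magnitude among the entries of `z`
(defined as `sInf` of the set of nonzero magnitudes; `0` if `z = 0`). -/
noncomputable def beta {n : ℕ} (z : Fin n → ℝ) : ℝ :=
  sInf {r : ℝ | ∃ i, z i ≠ 0 ∧ r = |z i|}

/-- `z` is an output of the hard-thresholding operator `H_s` applied to `y`:
there is a set `T` of `min s n` indices carrying largest-magnitude entries of `y`,
such that `z` agrees with `y` on `T` and vanishes off `T`. -/
def IsHardThreshold {n : ℕ} (s : ℕ) (y z : Fin n → ℝ) : Prop :=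
  ∃ T : Finset (Fin n), T.card = min s n ∧ (∀ i ∈ T, z i = y i) ∧ (∀ i ∉ T, z i = 0) ∧
    ∀ i ∈ T, ∀ j ∉ T, |y j| ≤ |y i|

/-- `A = U * S * Vᵀ` is a full singular value decomposition of `A`:
`U, V` orthogonal and `S` diagonal with nonnegative entries. -/
def IsFullSVD {n : ℕ} (A U S V : Matrix (Fin n) (Fin n) ℝ) : Prop :=
  Uᵀ * U = 1 ∧ Vᵀ * V = 1 ∧ (∀ i j, i ≠ j → S i j = 0) ∧ (∀ i, 0 ≤ S i i) ∧ A = U * S * Vᵀ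

/-- `W = V * Uᵀ` for some full SVD `A = U * S * Vᵀ`. -/
def IsPolarFromSVD {n : ℕ} (A W : Matrix (Fin n) (Fin n) ℝ) : Prop :=
  ∃ U S V, IsFullSVD A U S V ∧ W = V * Uᵀ

/-- `D_k`: the n×n diagonal matrix of ones with a zero at entry (k,k). -/
noncomputable def Dmat {n : ℕ} (k : Fin n) : Matrix (Fin n) (Fin n) ℝ :=
  Matrix.diagonal (fun i => if i = k then 0 else 1)

-- `D̃_k`: the N×N diagonal matrix with ones at the support of the k-th row of `Zs`.
open Classical in
noncomputable def Dtil {n N : ℕ} (Zs : Matrix (Fin n) (Fin N) ℝ) (k : Fin n) :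
    Matrix (Fin N) (Fin N) ℝ :=
  Matrix.diagonal (fun i => if Zs k i ≠ 0 then 1 else 0)

/-- `q = max_{1 ≤ k ≤ n} ‖D_k Z* D̃_k‖₂`. -/
noncomputable def qZero {n N : ℕ} (Zs : Matrix (Fin n) (Fin N) ℝ) : ℝ :=
  ⨆ k, specNorm (Dmat k * Zs * Dtil Zs k)

/-- Smallest singular value of an n×N matrix: `min_{‖x‖=1, x ∈ ℝⁿ} ‖Aᵀ x‖`. -/
noncomputable def sigmaMin {n N : ℕ} (A : Matrix (Fin n) (Fin N) ℝ) : ℝ :=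
  sInf {r : ℝ | ∃ x : EuclideanSpace ℝ (Fin n), ‖x‖ = 1 ∧ r = ‖Matrix.toEuclideanLin Aᵀ x‖}

/-- Condition number κ(A): ratio of largest to smallest singular value. -/
noncomputable def condNumber {n N : ℕ} (A : Matrix (Fin n) (Fin N) ℝ) : ℝ :=
  specNorm A / sigmaMin A

/-- `q = κ⁴(Z*) · max_{1 ≤ k ≤ n} ‖D_k Z* Z*ᵀ Z* D̃_k‖₂`. -/
noncomputable def qGen {n N : ℕ} (Zs : Matrix (Fin n) (Fin N) ℝ) : ℝ :=
  condNumber Zs ^ 4 * ⨆ k, specNorm (Dmat k * Zs * Zsᵀ * Zs * Dtil Zs k)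

/-
Write `M_k = D_k Z* D̃_k` and let `W` be the n×n matrix whose k-th row is `M_k Δ_(k,·)ᵀ`.
Since `D̃_k` fixes `Δ_(k,·)` by the support hypothesis, `W` agrees with `Δ Z*ᵀ` off the
diagonal, so the antisymmetric matrix `Δ Z*ᵀ − Z* Δᵀ` equals `W − Wᵀ` and its Frobenius norm
is at most `2 ‖W‖_F`. The middle quantity is `‖W‖_F`, and bounding each row by the operator
norm of `M_k` gives the second inequality.
-/

lemma vecNorm_eq_norm_toLp {n : ℕ} (v : Fin n → ℝ) : vecNorm v = ‖WithLp.toLp 2 v‖ := by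
  simp [vecNorm, EuclideanSpace.norm_eq, sq_abs]

lemma vecNorm_nonneg {n : ℕ} (v : Fin n → ℝ) : 0 ≤ vecNorm v := Real.sqrt_nonneg _

lemma vecNorm_sq {n : ℕ} (v : Fin n → ℝ) : vecNorm v ^ 2 = ∑ i, v i ^ 2 :=
  Real.sq_sqrt (Finset.sum_nonneg fun _ _ => sq_nonneg _)

lemma vecNorm_mulVec_le {m n : ℕ} (A : Matrix (Fin m) (Fin n) ℝ) (v : Fin n → ℝ) :
    vecNorm (A *ᵥ v) ≤ specNorm A * vecNorm v := by
  simpa [vecNorm_eq_norm_toLp, specNorm, Matrix.toLpLin_toLp] using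
    (LinearMap.toContinuousLinearMap (Matrix.toEuclideanLin A)).le_opNorm (WithLp.toLp 2 v)

lemma specNorm_nonneg {m n : ℕ} (A : Matrix (Fin m) (Fin n) ℝ) : 0 ≤ specNorm A :=
  norm_nonneg _

lemma frobNorm_eq_sqrt_sum_vecNorm_sq {m n : ℕ} (A : Matrix (Fin m) (Fin n) ℝ) :
    frobNorm A = √(∑ i, vecNorm (A i) ^ 2) := by
  simp only [frobNorm, vecNorm_sq]

section Frobenius

attribute [local instance] Matrix.frobeniusSeminormedAddCommGroup

lemma frobNorm_eq_frobenius_norm {m n : ℕ} (A : Matrix (Fin m) (Fin n) ℝ) :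
    frobNorm A = ‖A‖ := by
  simp [frobNorm, Matrix.frobenius_norm_def, Real.sqrt_eq_rpow, sq_abs]

lemma frobNorm_sub_transpose_le {n : ℕ} (W : Matrix (Fin n) (Fin n) ℝ) :
    frobNorm (W - Wᵀ) ≤ 2 * frobNorm W := by
  simp only [frobNorm_eq_frobenius_norm]
  calc ‖W - Wᵀ‖ ≤ ‖W‖ + ‖Wᵀ‖ := norm_sub_le _ _
    _ = 2 * ‖W‖ := by rw [Matrix.frobenius_norm_transpose]; ring

end Frobenius

lemma Matrix.sub_transpose_eq_of_offDiag_eq {ι R : Type*} [AddGroup R]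
    {P W : Matrix ι ι R} (h : ∀ i j, i ≠ j → W i j = P i j) : P - Pᵀ = W - Wᵀ := by
  ext i j
  by_cases hij : i = j
  · simp [hij]
  · simp [h i j hij, h j i (Ne.symm hij)]

lemma sqrt_sum_vecNorm_mulVec_sq_le {n m N : ℕ} (B : Fin n → Matrix (Fin m) (Fin N) ℝ)
    (Δ : Matrix (Fin n) (Fin N) ℝ) {c : ℝ} (hc : 0 ≤ c) (hB : ∀ k, specNorm (B k) ≤ c) :
    √(∑ k, vecNorm (B k *ᵥ Δ k) ^ 2) ≤ c * frobNorm Δ := by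
  have hrow : ∀ k, vecNorm (B k *ᵥ Δ k) ^ 2 ≤ (c * vecNorm (Δ k)) ^ 2 := fun k =>
    pow_le_pow_left₀ (vecNorm_nonneg _)
      ((vecNorm_mulVec_le _ _).trans (mul_le_mul_of_nonneg_right (hB k) (vecNorm_nonneg _))) 2
  calc √(∑ k, vecNorm (B k *ᵥ Δ k) ^ 2) ≤ √(∑ k, (c * vecNorm (Δ k)) ^ 2) :=
        Real.sqrt_le_sqrt (Finset.sum_le_sum fun k _ => hrow k)
    _ = c * frobNorm Δ := by
        simp_rw [mul_pow, ← Finset.mul_sum, Real.sqrt_mul (sq_nonneg c), Real.sqrt_sq hc,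
          frobNorm_eq_sqrt_sum_vecNorm_sq]

lemma Dtil_mulVec_of_support_subset {n N : ℕ} {Zs : Matrix (Fin n) (Fin N) ℝ} {k : Fin n}
    {v : Fin N → ℝ} (hv : ∀ i, v i ≠ 0 → Zs k i ≠ 0) : Dtil Zs k *ᵥ v = v := by
  ext i
  by_cases hi : v i = 0
  · simp [Dtil, Matrix.mulVec_diagonal, hi]
  · simp [Dtil, Matrix.mulVec_diagonal, hv i hi]

lemma Dmat_mulVec_apply_of_ne {n : ℕ} {j k : Fin n} (hjk : j ≠ k) (v : Fin n → ℝ) :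
    (Dmat k *ᵥ v) j = v j := by
  simp [Dmat, Matrix.mulVec_diagonal, hjk]

lemma Dmat_mul_mul_Dtil_mulVec_apply_of_ne {n N : ℕ} {Zs : Matrix (Fin n) (Fin N) ℝ}
    {k j : Fin n} (hjk : j ≠ k) {v : Fin N → ℝ} (hv : ∀ i, v i ≠ 0 → Zs k i ≠ 0) :
    ((Dmat k * Zs * Dtil Zs k) *ᵥ v) j = (Zs *ᵥ v) j := by
  rw [← Matrix.mulVec_mulVec, ← Matrix.mulVec_mulVec, Dtil_mulVec_of_support_subset hv,
    Dmat_mulVec_apply_of_ne hjk]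

/-- the key chain of inequalities bounding
`(1/2)‖Δ Z*ᵀ − Z* Δᵀ‖_F` when row supports of `Δ` lie in those of `Z*`. -/
theorem stmt11
    {n N : ℕ} (Zs Δ : Matrix (Fin n) (Fin N) ℝ)
    (hsupp : ∀ k i, Δ k i ≠ 0 → Zs k i ≠ 0) :
    (1/2) * frobNorm (Δ * Zsᵀ - Zs * Δᵀ) ≤
      Real.sqrt (∑ k, vecNorm ((Dmat k * Zs * Dtil Zs k).mulVec (fun i => Δ k i)) ^ 2) ∧
    Real.sqrt (∑ k, vecNorm ((Dmat k * Zs * Dtil Zs k).mulVec (fun i => Δ k i)) ^ 2) ≤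
      (⨆ k, specNorm (Dmat k * Zs * Dtil Zs k)) * frobNorm Δ := by
  set M : Fin n → Matrix (Fin n) (Fin N) ℝ := fun k => Dmat k * Zs * Dtil Zs k
  set W : Matrix (Fin n) (Fin n) ℝ := Matrix.of fun k => M k *ᵥ Δ k
  have hW : ∀ k j, k ≠ j → W k j = (Δ * Zsᵀ) k j := fun k j hkj => by
    change (M k *ᵥ Δ k) j = _
    rw [Dmat_mul_mul_Dtil_mulVec_apply_of_ne hkj.symm (hsupp k)]
    simp only [Matrix.mulVec, Matrix.mul_apply, dotProduct, Matrix.transpose_apply, mul_comm]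
  have hanti : Δ * Zsᵀ - Zs * Δᵀ = W - Wᵀ := by
    simpa [Matrix.transpose_mul] using Matrix.sub_transpose_eq_of_offDiag_eq hW
  refine ⟨?_, ?_⟩
  · calc (1/2) * frobNorm (Δ * Zsᵀ - Zs * Δᵀ) ≤ frobNorm W := by
          rw [hanti]; linarith [frobNorm_sub_transpose_le W]
      _ = _ := frobNorm_eq_sqrt_sum_vecNorm_sq W
  · exact sqrt_sum_vecNorm_mulVec_sq_le M Δ (Real.iSup_nonneg fun k => specNorm_nonneg (M k))
      fun k => le_ciSup (f := fun k => specNorm (M k)) (Finite.bddAbove_range _) k
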